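/- Let y be a 3-strand braid with left normal form y = Δ^p y_1⋯y_r, where r ≥ 2, and suppose the pair (y_r, τ^{−p}(y_1)) is not left-weighted (i.e. y is not rigid). Then the conjugate z = τ^{−p}(y_1)^{−1} y τ^{−p}(y_1) = Δ^p y_2⋯y_r τ^{−p}(y_1) has canonical length ℓ(z) < r. -/

import Mathlib

/-!
Garside-theoretic definitions for the Artin braid group `B n`,
presented with generators `σ_1, …, σ_{n-1}` (indexed by `Fin (n-1)`).
-/

namespace Braid

/-- The braid relations on `m` generators: `σᵢσⱼ = σⱼσᵢ` for `|i - j| ≥ 2` and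
`σᵢσⱼσᵢ = σⱼσᵢσⱼ` for `j = i + 1`. -/
def braidRels (m : ℕ) : Set (FreeGroup (Fin m)) :=
  {r | ∃ i j : Fin m, ((i : ℕ) + 2 ≤ (j : ℕ) ∨ (j : ℕ) + 2 ≤ (i : ℕ)) ∧
      r = FreeGroup.of i * FreeGroup.of j * (FreeGroup.of j * FreeGroup.of i)⁻¹} ∪
  {r | ∃ i j : Fin m, (j : ℕ) = (i : ℕ) + 1 ∧
      r = FreeGroup.of i * FreeGroup.of j * FreeGroup.of i *
          (FreeGroup.of j * FreeGroup.of i * FreeGroup.of j)⁻¹}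

/-- The braid group on `n` strands. -/
abbrev B (n : ℕ) : Type := PresentedGroup (braidRels (n - 1))

/-- The Artin generator `σ_{i+1}` (0-indexed) of `B n`. -/
def gen (n : ℕ) (i : Fin (n - 1)) : B n := PresentedGroup.of i

/-- The Artin generator, as a function of a natural number index (junk value `1`
out of range). -/
def gen' (n : ℕ) (i : ℕ) : B n := if h : i < n - 1 then gen n ⟨i, h⟩ else 1

/-- The submonoid of positive braids `B_n⁺`. -/
def posMon (n : ℕ) : Submonoid (B n) := Submonoid.closure (Set.range (gen n))

/-- The prefix order: `a ≼ b` iff `a⁻¹ * b` is a positive braid. -/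
def Pref (n : ℕ) (a b : B n) : Prop := a⁻¹ * b ∈ posMon n

/-- The Garside half-twist `Δ = (σ_1 ⋯ σ_{n-1})(σ_1 ⋯ σ_{n-2}) ⋯ (σ_1 σ_2) σ_1`. -/
def Δb (n : ℕ) : B n :=
  (((List.range (n - 1)).reverse).map
    (fun k => ((List.range (k + 1)).map (gen' n)).prod)).prod

/-- The power `τ^k` of the inner automorphism `τ(x) = Δ⁻¹ x Δ`. -/
def τpow (n : ℕ) (k : ℤ) (x : B n) : B n := (Δb n) ^ (-k) * x * (Δb n) ^ k

/-- A braid is simple if `1 ≼ s ≼ Δ`. -/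
def IsSimple (n : ℕ) (s : B n) : Prop := Pref n 1 s ∧ Pref n s (Δb n)

/-- The right complement `∂(s) = s⁻¹ Δ` of a simple element. -/
def dcompl (n : ℕ) (s : B n) : B n := s⁻¹ * Δb n

/-- A pair `(a, b)` is left-weighted if `b ∧ ∂(a) = 1`, i.e. the only common
positive prefix of `b` and `∂(a)` is trivial. -/
def LeftWeighted (n : ℕ) (a b : B n) : Prop :=
  ∀ t : B n, Pref n 1 t → Pref n t b → Pref n t (dcompl n a) → t = 1

/-- `IsLNF n x p L` : the expression `Δ^p * L.prod` is the left normal form of `x`,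
i.e. each factor is simple, nontrivial, different from `Δ`, and each pair of
consecutive factors is left-weighted. -/
def IsLNF (n : ℕ) (x : B n) (p : ℤ) (L : List (B n)) : Prop :=
  x = (Δb n) ^ p * L.prod ∧
  (∀ s ∈ L, IsSimple n s ∧ s ≠ 1 ∧ s ≠ Δb n) ∧
  (∀ i : ℕ, i + 1 < L.length →
    LeftWeighted n (L.getD i 1) (L.getD (i + 1) 1))

/-- The canonical length `ℓ(x)`: the number of non-`Δ` factors in the left normal
form of `x`. -/
noncomputable def canLen (n : ℕ) (x : B n) : ℕ :=
  sInf {r : ℕ | ∃ p L, List.length L = r ∧ IsLNF n x p L}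

/-- The infimum `inf(x)`: the power of `Δ` in the left normal form of `x`. -/
noncomputable def infB (n : ℕ) (x : B n) : ℤ :=
  sSup {p : ℤ | ∃ L, IsLNF n x p L}

/-- The summit canonical length `ℓ_s(x)`: the minimal canonical length in the
conjugacy class of `x`. -/
noncomputable def summitLen (n : ℕ) (x : B n) : ℕ :=
  sInf {r : ℕ | ∃ z, IsConj x z ∧ canLen n z = r}

/-- The super summit set `SSS(x)`: conjugates of `x` of minimal canonical length. -/
def SSS (n : ℕ) (x : B n) : Set (B n) :=
  {y | IsConj x y ∧ canLen n y = summitLen n x}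

/-- A braid `x = Δ^p x_1 ⋯ x_r` (in left normal form, `r ≥ 1`) is rigid if the
pair `(x_r, τ^{-p}(x_1))` is left-weighted. -/
def Rigid (n : ℕ) (x : B n) : Prop :=
  ∃ p L, IsLNF n x p L ∧ L ≠ [] ∧
    LeftWeighted n (L.getLastD 1) (τpow n (-p) (L.headD 1))

/-- Cycling: for `x = Δ^p x_1 ⋯ x_r` in left normal form with `r ≥ 1`,
`c(x) = τ^{-p}(x_1)⁻¹ * x * τ^{-p}(x_1)` (and `c(x) = x` if `ℓ(x) = 0`). -/
noncomputable def cyc (n : ℕ) (x : B n) : B n :=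
  open Classical in
  if h : ∃ pL : ℤ × List (B n), IsLNF n x pL.1 pL.2 ∧ pL.2 ≠ [] then
    (τpow n (-(Classical.choose h).1) ((Classical.choose h).2.headD 1))⁻¹ * x *
      τpow n (-(Classical.choose h).1) ((Classical.choose h).2.headD 1)
  else x



/-! ### Auxiliary development for the 3-strand braid group -/

def s1 : B 3 := gen 3 0
def s2 : B 3 := gen 3 1

lemma delta_eq : Δb 3 = s1 * s2 * s1 := by
  show (((List.range 2).reverse).map
    (fun k => ((List.range (k + 1)).map (gen' 3)).prod)).prod = _
  simp [List.range_succ, gen', s1, s2]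

lemma braid_rel : s1 * s2 * s1 = s2 * s1 * s2 := by
  have h : (FreeGroup.of (0 : Fin 2) * FreeGroup.of (1 : Fin 2) * FreeGroup.of 0 *
      (FreeGroup.of 1 * FreeGroup.of 0 * FreeGroup.of 1)⁻¹) ∈ braidRels 2 := by
    right
    exact ⟨0, 1, by norm_num, rfl⟩
  have h2 : PresentedGroup.mk (braidRels 2) (FreeGroup.of (0 : Fin 2) * FreeGroup.of 1 *
      FreeGroup.of 0 * (FreeGroup.of 1 * FreeGroup.of 0 * FreeGroup.of 1)⁻¹) = 1 :=
    (QuotientGroup.eq_one_iff _).2 (Subgroup.subset_normalClosure h)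
  have h3 : (s1 * s2 * s1) * (s2 * s1 * s2)⁻¹ = 1 := by
    simpa [s1, s2, gen, PresentedGroup.of, map_mul, map_inv] using h2
  group at h3 ⊢
  exact mul_inv_eq_one.mp h3

lemma delta_eq' : Δb 3 = s2 * s1 * s2 := by rw [delta_eq, braid_rel]

lemma rels_check {G : Type*} [Group G] (f : Fin 2 → G)
    (hb : f 0 * f 1 * f 0 = f 1 * f 0 * f 1) :
    ∀ r ∈ braidRels 2, FreeGroup.lift f r = 1 := by
  rintro r (⟨i, j, hij, rfl⟩ | ⟨i, j, hij, rfl⟩)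
  · exfalso; have := i.isLt; have := j.isLt; omega
  · have hi : i = 0 := by have := i.isLt; have := j.isLt; omega
    have hj : j = 1 := by have := i.isLt; have := j.isLt; omega
    subst hi; subst hj
    simp only [map_mul, map_inv, FreeGroup.lift_apply_of]
    rw [mul_inv_eq_one]; exact hb

def EE : B 3 →* Multiplicative ℤ :=
  PresentedGroup.toGroup (f := fun _ => Multiplicative.ofAdd (1:ℤ))
    (rels_check _ rfl)

def pp : B 3 →* Equiv.Perm (Fin 3) :=
  PresentedGroup.toGroup
    (f := fun i => if i = 0 then Equiv.swap 0 1 else Equiv.swap 1 2)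
    (rels_check _ (by decide))

def ee (x : B 3) : ℤ := Multiplicative.toAdd (EE x)

@[simp] lemma ee_one : ee 1 = 0 := by simp [ee]
@[simp] lemma ee_mul (x y : B 3) : ee (x * y) = ee x + ee y := by simp [ee]
@[simp] lemma ee_inv (x : B 3) : ee x⁻¹ = - ee x := by simp [ee]
@[simp] lemma ee_s1 : ee s1 = 1 := by simp [ee, EE, s1, gen]
@[simp] lemma ee_s2 : ee s2 = 1 := by simp [ee, EE, s2, gen]
@[simp] lemma pp_s1 : pp s1 = Equiv.swap 0 1 := by simp [pp, s1, gen]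
@[simp] lemma pp_s2 : pp s2 = Equiv.swap 1 2 := by simp [pp, s2, gen]

lemma mem_pos (x : B 3) (hx : x ∈ posMon 3) :
    ∃ l : List (B 3), (∀ y ∈ l, y = s1 ∨ y = s2) ∧ l.prod = x := by
  obtain ⟨l, hl, hprod⟩ := Submonoid.exists_list_of_mem_closure hx
  refine ⟨l, ?_, hprod⟩
  intro y hy
  obtain ⟨i, rfl⟩ := hl y hy
  fin_cases i
  · left; rfl
  · right; rfl

lemma ee_list (l : List (B 3)) (hl : ∀ y ∈ l, y = s1 ∨ y = s2) :
    ee l.prod = l.length := by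
  induction l with
  | nil => simp
  | cons a t ih =>
    have ha := hl a (by simp)
    have : ee a = 1 := by rcases ha with rfl | rfl <;> simp
    simp [this, ih (fun y hy => hl y (by simp [hy]))]
    omega

lemma ee_nonneg (x : B 3) (hx : x ∈ posMon 3) : 0 ≤ ee x := by
  obtain ⟨l, hl, rfl⟩ := mem_pos x hx
  rw [ee_list l hl]; positivity

lemma pos_cases (x : B 3) (hx : x ∈ posMon 3) :
    x = 1 ∨ ((x = s1 ∨ x = s2) ∧ ee x = 1) ∨ 2 ≤ ee x := by
  obtain ⟨l, hl, rfl⟩ := mem_pos x hx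
  match l, hl with
  | [], _ => left; simp
  | [a], hl =>
    right; left
    have := hl a (by simp)
    constructor
    · simpa using this
    · rcases this with rfl | rfl <;> simp
  | a :: b :: t, hl =>
    right; right
    rw [ee_list _ hl]
    simp; omega

lemma eq_one_of_pos_ee_zero (x : B 3) (hx : x ∈ posMon 3) (h : ee x = 0) : x = 1 := by
  rcases pos_cases x hx with h1 | ⟨_, h1⟩ | h1 <;> first | exact h1 | omega

lemma s1_ne_s2 : s1 ≠ s2 := by
  intro h
  have := congrArg pp h
  simp only [pp_s1, pp_s2] at this
  exact absurd this (by decide)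

lemma A_ne_B : s1 * s2 ≠ s2 * s1 := by
  intro h
  have := congrArg pp h
  simp only [map_mul, pp_s1, pp_s2] at this
  exact absurd this (by decide)

lemma pos_s1 : s1 ∈ posMon 3 := Submonoid.subset_closure ⟨0, rfl⟩
lemma pos_s2 : s2 ∈ posMon 3 := Submonoid.subset_closure ⟨1, rfl⟩

lemma NP1 : s1⁻¹ * (s2 * s1) ∉ posMon 3 := by
  intro h
  have he : ee (s1⁻¹ * (s2 * s1)) = 1 := by simp
  rcases pos_cases _ h with h1 | ⟨h1 | h1, _⟩ | h1
  · rw [h1] at he; simp at he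
  · have := congrArg pp h1
    simp only [map_mul, map_inv, pp_s1, pp_s2] at this
    exact absurd this (by decide)
  · have := congrArg pp h1
    simp only [map_mul, map_inv, pp_s1, pp_s2] at this
    exact absurd this (by decide)
  · omega

lemma NP2 : s2⁻¹ * (s1 * s2) ∉ posMon 3 := by
  intro h
  have he : ee (s2⁻¹ * (s1 * s2)) = 1 := by simp
  rcases pos_cases _ h with h1 | ⟨h1 | h1, _⟩ | h1
  · rw [h1] at he; simp at he
  · have := congrArg pp h1
    simp only [map_mul, map_inv, pp_s1, pp_s2] at this
    exact absurd this (by decide)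
  · have := congrArg pp h1
    simp only [map_mul, map_inv, pp_s1, pp_s2] at this
    exact absurd this (by decide)
  · omega

lemma eq_of_pref_ee (t x : B 3) (h : t⁻¹ * x ∈ posMon 3) (he : ee t = ee x) : t = x := by
  have := eq_one_of_pos_ee_zero _ h (by simp [he])
  rw [inv_mul_eq_one] at this
  exact this

lemma pref_s1 (t : B 3) (ht : t ∈ posMon 3) (h : t⁻¹ * s1 ∈ posMon 3) :
    t = 1 ∨ t = s1 := by
  have h1 := ee_nonneg _ h
  simp only [ee_mul, ee_inv, ee_s1] at h1
  rcases pos_cases t ht with h2 | ⟨h2 | h2, _⟩ | h2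
  · exact Or.inl h2
  · exact Or.inr h2
  · subst h2
    exact absurd (eq_of_pref_ee _ _ h (by simp)).symm s1_ne_s2
  · omega

lemma pref_s2 (t : B 3) (ht : t ∈ posMon 3) (h : t⁻¹ * s2 ∈ posMon 3) :
    t = 1 ∨ t = s2 := by
  have h1 := ee_nonneg _ h
  simp only [ee_mul, ee_inv, ee_s2] at h1
  rcases pos_cases t ht with h2 | ⟨h2 | h2, _⟩ | h2
  · exact Or.inl h2
  · subst h2
    exact absurd (eq_of_pref_ee _ _ h (by simp)) s1_ne_s2
  · exact Or.inr h2
  · omega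

lemma pref_A (t : B 3) (ht : t ∈ posMon 3) (h : t⁻¹ * (s1 * s2) ∈ posMon 3) :
    t = 1 ∨ t = s1 ∨ t = s1 * s2 := by
  have h1 := ee_nonneg _ h
  simp only [ee_mul, ee_inv, ee_s1, ee_s2] at h1
  rcases pos_cases t ht with h2 | ⟨h2 | h2, _⟩ | h2
  · exact Or.inl h2
  · exact Or.inr (Or.inl h2)
  · subst h2; exact absurd h NP2
  · refine Or.inr (Or.inr ?_)
    exact eq_of_pref_ee _ _ h (by simp; omega)

lemma pref_B (t : B 3) (ht : t ∈ posMon 3) (h : t⁻¹ * (s2 * s1) ∈ posMon 3) :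
    t = 1 ∨ t = s2 ∨ t = s2 * s1 := by
  have h1 := ee_nonneg _ h
  simp only [ee_mul, ee_inv, ee_s1, ee_s2] at h1
  rcases pos_cases t ht with h2 | ⟨h2 | h2, _⟩ | h2
  · exact Or.inl h2
  · subst h2; exact absurd h NP1
  · exact Or.inr (Or.inl h2)
  · refine Or.inr (Or.inr ?_)
    exact eq_of_pref_ee _ _ h (by simp; omega)

lemma pref_D (t : B 3) (ht : t ∈ posMon 3) (h : t⁻¹ * Δb 3 ∈ posMon 3) :
    t = 1 ∨ t = s1 ∨ t = s2 ∨ t = s1 * s2 ∨ t = s2 * s1 ∨ t = Δb 3 := by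
  have h1 := ee_nonneg _ h
  have heD : ee (Δb 3) = 3 := by rw [delta_eq]; simp
  simp only [ee_mul, ee_inv, heD] at h1
  rcases pos_cases t ht with h2 | ⟨h2 | h2, _⟩ | h2
  · exact Or.inl h2
  · exact Or.inr (Or.inl h2)
  · exact Or.inr (Or.inr (Or.inl h2))
  · -- 2 ≤ ee t
    rcases pos_cases _ h with h3 | ⟨h3 | h3, _⟩ | h3
    · rw [inv_mul_eq_one] at h3
      exact Or.inr (Or.inr (Or.inr (Or.inr (Or.inr h3))))
    · -- t⁻¹ Δ = s1, so t = Δ s1⁻¹ = s1 s2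
      have : t = Δb 3 * s1⁻¹ := by
        rw [eq_mul_inv_iff_mul_eq, ← h3]; group
      refine Or.inr (Or.inr (Or.inr (Or.inl ?_)))
      rw [this, delta_eq]; group
    · have : t = Δb 3 * s2⁻¹ := by
        rw [eq_mul_inv_iff_mul_eq, ← h3]; group
      refine Or.inr (Or.inr (Or.inr (Or.inr (Or.inl ?_))))
      rw [this, delta_eq']; group
    · have he2 : ee (t⁻¹ * Δb 3) = 3 - ee t := by simp [heD]; ring
      omega

/-! ### S4 : the proper simple elements -/

def isS4 (y : B 3) : Prop := y = s1 ∨ y = s2 ∨ y = s1 * s2 ∨ y = s2 * s1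

lemma pos_of_S4 {y : B 3} (h : isS4 y) : y ∈ posMon 3 := by
  rcases h with rfl | rfl | rfl | rfl
  exacts [pos_s1, pos_s2, mul_mem pos_s1 pos_s2, mul_mem pos_s2 pos_s1]

lemma ee_S4 {y : B 3} (h : isS4 y) : ee y = 1 ∨ ee y = 2 := by
  rcases h with rfl | rfl | rfl | rfl <;> simp

lemma simple_of_S4 {y : B 3} (h : isS4 y) : IsSimple 3 y := by
  constructor
  · show (1:B 3)⁻¹ * y ∈ posMon 3
    simpa using pos_of_S4 h
  · show y⁻¹ * Δb 3 ∈ posMon 3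
    rcases h with rfl | rfl | rfl | rfl
    · rw [delta_eq]
      have : s1⁻¹ * (s1 * s2 * s1) = s2 * s1 := by group
      rw [this]; exact mul_mem pos_s2 pos_s1
    · rw [delta_eq']
      have : s2⁻¹ * (s2 * s1 * s2) = s1 * s2 := by group
      rw [this]; exact mul_mem pos_s1 pos_s2
    · rw [delta_eq]
      have : (s1 * s2)⁻¹ * (s1 * s2 * s1) = s1 := by group
      rw [this]; exact pos_s1
    · rw [delta_eq']
      have : (s2 * s1)⁻¹ * (s2 * s1 * s2) = s2 := by group
      rw [this]; exact pos_s2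

lemma ne_one_of_S4 {y : B 3} (h : isS4 y) : y ≠ 1 := by
  intro h1
  rcases ee_S4 h with h2 | h2 <;> rw [h1] at h2 <;> simp at h2

lemma ne_D_of_S4 {y : B 3} (h : isS4 y) : y ≠ Δb 3 := by
  intro h1
  have heD : ee (Δb 3) = 3 := by rw [delta_eq]; simp
  rcases ee_S4 h with h2 | h2 <;> rw [h1, heD] at h2 <;> simp at h2

lemma S4_of_simple {y : B 3} (h : IsSimple 3 y) (h1 : y ≠ 1) (hD : y ≠ Δb 3) :
    isS4 y := by
  obtain ⟨hp, hd⟩ := h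
  have hp' : y ∈ posMon 3 := by simpa [Pref] using hp
  rcases pref_D y hp' hd with h2 | h2 | h2 | h2 | h2 | h2
  · exact absurd h2 h1
  · exact Or.inl h2
  · exact Or.inr (Or.inl h2)
  · exact Or.inr (Or.inr (Or.inl h2))
  · exact Or.inr (Or.inr (Or.inr h2))
  · exact absurd h2 hD

/-! ### dcompl computations -/

lemma dcompl_s1 : dcompl 3 s1 = s2 * s1 := by
  rw [dcompl, delta_eq]; group
lemma dcompl_s2 : dcompl 3 s2 = s1 * s2 := by
  rw [dcompl, delta_eq']; group
lemma dcompl_A : dcompl 3 (s1 * s2) = s1 := by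
  rw [dcompl, delta_eq]; group
lemma dcompl_B : dcompl 3 (s2 * s1) = s2 := by
  rw [dcompl, delta_eq']; group

/-! ### Left-weighted pairs -/

lemma pref_one (t : B 3) : Pref 3 1 t ↔ t ∈ posMon 3 := by
  simp [Pref]

lemma LW_s1_s1 : LeftWeighted 3 s1 s1 := by
  intro t ht hb hd
  rw [pref_one] at ht
  rw [Pref, dcompl_s1] at hd
  rcases pref_s1 t ht hb with rfl | rfl
  · rfl
  · exact absurd hd NP1

lemma LW_s1_A : LeftWeighted 3 s1 (s1 * s2) := by
  intro t ht hb hd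
  rw [pref_one] at ht
  rw [Pref, dcompl_s1] at hd
  rcases pref_A t ht hb with rfl | rfl | rfl
  · rfl
  · exact absurd hd NP1
  · exact absurd (eq_of_pref_ee _ _ hd (by simp)) A_ne_B

lemma LW_s2_s2 : LeftWeighted 3 s2 s2 := by
  intro t ht hb hd
  rw [pref_one] at ht
  rw [Pref, dcompl_s2] at hd
  rcases pref_s2 t ht hb with rfl | rfl
  · rfl
  · exact absurd hd NP2

lemma LW_s2_B : LeftWeighted 3 s2 (s2 * s1) := by
  intro t ht hb hd
  rw [pref_one] at ht
  rw [Pref, dcompl_s2] at hd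
  rcases pref_B t ht hb with rfl | rfl | rfl
  · rfl
  · exact absurd hd NP2
  · exact absurd (eq_of_pref_ee _ _ hd (by simp)).symm A_ne_B

lemma LW_A_s2 : LeftWeighted 3 (s1 * s2) s2 := by
  intro t ht hb hd
  rw [pref_one] at ht
  rw [Pref, dcompl_A] at hd
  rcases pref_s2 t ht hb with rfl | rfl
  · rfl
  · exact absurd (eq_of_pref_ee _ _ hd (by simp)).symm s1_ne_s2

lemma LW_A_B : LeftWeighted 3 (s1 * s2) (s2 * s1) := by
  intro t ht hb hd
  rw [pref_one] at ht
  rw [Pref, dcompl_A] at hd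
  rcases pref_B t ht hb with rfl | rfl | rfl
  · rfl
  · exact absurd (eq_of_pref_ee _ _ hd (by simp)).symm s1_ne_s2
  · have := ee_nonneg _ hd; simp at this

lemma LW_B_s1 : LeftWeighted 3 (s2 * s1) s1 := by
  intro t ht hb hd
  rw [pref_one] at ht
  rw [Pref, dcompl_B] at hd
  rcases pref_s1 t ht hb with rfl | rfl
  · rfl
  · exact absurd (eq_of_pref_ee _ _ hd (by simp)) s1_ne_s2

lemma LW_B_A : LeftWeighted 3 (s2 * s1) (s1 * s2) := by
  intro t ht hb hd
  rw [pref_one] at ht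
  rw [Pref, dcompl_B] at hd
  rcases pref_A t ht hb with rfl | rfl | rfl
  · rfl
  · exact absurd (eq_of_pref_ee _ _ hd (by simp)) s1_ne_s2
  · have := ee_nonneg _ hd; simp at this

/-! ### Conjugation by Δ -/

lemma s1D : s1 * Δb 3 = Δb 3 * s2 := by
  have h1 : s1 * Δb 3 = s1*(s2*(s1*s2)) := by rw [delta_eq']; group
  have h2 : Δb 3 * s2 = s1*(s2*(s1*s2)) := by rw [delta_eq]; group
  rw [h1, h2]

lemma s2D : s2 * Δb 3 = Δb 3 * s1 := by
  have h1 : s2 * Δb 3 = s2*(s1*(s2*s1)) := by rw [delta_eq]; group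
  have h2 : Δb 3 * s1 = s2*(s1*(s2*s1)) := by rw [delta_eq']; group
  rw [h1, h2]

def ψm : B 3 →* B 3 where
  toFun x := (Δb 3)⁻¹ * x * Δb 3
  map_one' := by group
  map_mul' x y := by group

lemma ψm_apply (x : B 3) : ψm x = (Δb 3)⁻¹ * x * Δb 3 := rfl

lemma ψm_s1 : ψm s1 = s2 := by
  rw [ψm_apply, mul_assoc, s1D]; group

lemma ψm_s2 : ψm s2 = s1 := by
  rw [ψm_apply, mul_assoc, s2D]; group

lemma ψm_S4 {y : B 3} (h : isS4 y) : isS4 (ψm y) := by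
  rcases h with rfl | rfl | rfl | rfl
  · rw [ψm_s1]; exact Or.inr (Or.inl rfl)
  · rw [ψm_s2]; exact Or.inl rfl
  · rw [map_mul, ψm_s1, ψm_s2]; exact Or.inr (Or.inr (Or.inr rfl))
  · rw [map_mul, ψm_s1, ψm_s2]; exact Or.inr (Or.inr (Or.inl rfl))

lemma conj_pos_inv (x : B 3) (h : x ∈ posMon 3) : ψm x ∈ posMon 3 := by
  induction h using Submonoid.closure_induction with
  | mem y hy =>
    obtain ⟨i, rfl⟩ := hy
    fin_cases i
    · show ψm s1 ∈ posMon 3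
      rw [ψm_s1]; exact pos_s2
    · show ψm s2 ∈ posMon 3
      rw [ψm_s2]; exact pos_s1
  | one => rw [map_one]; exact one_mem _
  | mul a b ha hb iha ihb => rw [map_mul]; exact mul_mem iha ihb

lemma conj_pos (x : B 3) (h : x ∈ posMon 3) : Δb 3 * x * (Δb 3)⁻¹ ∈ posMon 3 := by
  induction h using Submonoid.closure_induction with
  | mem y hy =>
    obtain ⟨i, rfl⟩ := hy
    fin_cases i
    · show Δb 3 * s1 * (Δb 3)⁻¹ ∈ posMon 3
      rw [show Δb 3 * s1 = s2 * Δb 3 from s2D.symm]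
      rw [show s2 * Δb 3 * (Δb 3)⁻¹ = s2 by group]
      exact pos_s2
    · show Δb 3 * s2 * (Δb 3)⁻¹ ∈ posMon 3
      rw [show Δb 3 * s2 = s1 * Δb 3 from s1D.symm]
      rw [show s1 * Δb 3 * (Δb 3)⁻¹ = s1 by group]
      exact pos_s1
  | one => simpa using one_mem (posMon 3)
  | mul a b ha hb iha ihb =>
    have e : Δb 3 * (a * b) * (Δb 3)⁻¹ =
        (Δb 3 * a * (Δb 3)⁻¹) * (Δb 3 * b * (Δb 3)⁻¹) := by group
    rw [e]; exact mul_mem iha ihb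

lemma LW_conj {a b : B 3} (h : LeftWeighted 3 a b) :
    LeftWeighted 3 (ψm a) (ψm b) := by
  intro t ht hb hd
  rw [pref_one] at ht
  have hu : Δb 3 * t * (Δb 3)⁻¹ ∈ posMon 3 := conj_pos t ht
  have hub : (Δb 3 * t * (Δb 3)⁻¹)⁻¹ * b ∈ posMon 3 := by
    have h1 : t⁻¹ * ψm b ∈ posMon 3 := hb
    have h2 := conj_pos _ h1
    have e : Δb 3 * (t⁻¹ * ψm b) * (Δb 3)⁻¹ = (Δb 3 * t * (Δb 3)⁻¹)⁻¹ * b := by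
      rw [ψm_apply]; group
    rwa [e] at h2
  have hud : (Δb 3 * t * (Δb 3)⁻¹)⁻¹ * dcompl 3 a ∈ posMon 3 := by
    have h1 : t⁻¹ * dcompl 3 (ψm a) ∈ posMon 3 := hd
    have h2 := conj_pos _ h1
    have e : Δb 3 * (t⁻¹ * dcompl 3 (ψm a)) * (Δb 3)⁻¹ =
        (Δb 3 * t * (Δb 3)⁻¹)⁻¹ * dcompl 3 a := by
      rw [dcompl, dcompl, ψm_apply]; group
    rwa [e] at h2
  have := h _ ((pref_one _).2 hu) hub hud
  have e : t = (Δb 3)⁻¹ * (Δb 3 * t * (Δb 3)⁻¹) * Δb 3 := by group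
  rw [e, this]; group

/-! ### Δ² commutes with S4, and powers -/

lemma comm_sq {y : B 3} (hy : isS4 y) : Commute ((Δb 3)^(2:ℤ)) y := by
  have c1 : Commute ((Δb 3)^(2:ℤ)) s1 := by
    show (Δb 3)^(2:ℤ) * s1 = s1 * (Δb 3)^(2:ℤ)
    have e : (Δb 3)^(2:ℤ) = Δb 3 * Δb 3 := zpow_two _
    rw [e, mul_assoc, ← s2D, ← mul_assoc, ← s1D, mul_assoc]
  have c2 : Commute ((Δb 3)^(2:ℤ)) s2 := by
    show (Δb 3)^(2:ℤ) * s2 = s2 * (Δb 3)^(2:ℤ)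
    have e : (Δb 3)^(2:ℤ) = Δb 3 * Δb 3 := zpow_two _
    rw [e, mul_assoc, ← s1D, ← mul_assoc, ← s2D, mul_assoc]
  rcases hy with rfl | rfl | rfl | rfl
  exacts [c1, c2, c1.mul_right c2, c2.mul_right c1]

lemma conj_D_S4 {y : B 3} (hy : isS4 y) : isS4 (Δb 3 * y * (Δb 3)⁻¹) := by
  rcases hy with rfl | rfl | rfl | rfl
  · rw [show Δb 3 * s1 = s2 * Δb 3 from s2D.symm]
    rw [show s2 * Δb 3 * (Δb 3)⁻¹ = s2 by group]
    exact Or.inr (Or.inl rfl)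
  · rw [show Δb 3 * s2 = s1 * Δb 3 from s1D.symm]
    rw [show s1 * Δb 3 * (Δb 3)⁻¹ = s1 by group]
    exact Or.inl rfl
  · have e : Δb 3 * (s1 * s2) * (Δb 3)⁻¹ =
        (Δb 3 * s1 * (Δb 3)⁻¹) * (Δb 3 * s2 * (Δb 3)⁻¹) := by group
    rw [e, show Δb 3 * s1 = s2 * Δb 3 from s2D.symm,
      show Δb 3 * s2 = s1 * Δb 3 from s1D.symm,
      show s2 * Δb 3 * (Δb 3)⁻¹ = s2 by group,
      show s1 * Δb 3 * (Δb 3)⁻¹ = s1 by group]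
    exact Or.inr (Or.inr (Or.inr rfl))
  · have e : Δb 3 * (s2 * s1) * (Δb 3)⁻¹ =
        (Δb 3 * s2 * (Δb 3)⁻¹) * (Δb 3 * s1 * (Δb 3)⁻¹) := by group
    rw [e, show Δb 3 * s1 = s2 * Δb 3 from s2D.symm,
      show Δb 3 * s2 = s1 * Δb 3 from s1D.symm,
      show s2 * Δb 3 * (Δb 3)⁻¹ = s2 by group,
      show s1 * Δb 3 * (Δb 3)⁻¹ = s1 by group]
    exact Or.inr (Or.inr (Or.inl rfl))

lemma conj_zpow_S4 (p : ℤ) {y : B 3} (hy : isS4 y) :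
    isS4 ((Δb 3)^p * y * (Δb 3)^(-p)) := by
  have hdecomp : p = 2 * (p / 2) + p % 2 := (Int.mul_ediv_add_emod p 2).symm
  set q := p / 2 with hq
  set r := p % 2 with hr
  have c : ((Δb 3)^(2:ℤ))^q * y * (((Δb 3)^(2:ℤ))^q)⁻¹ = y := by
    have := ((comm_sq hy).zpow_left q).eq
    rw [this]; group
  have e : (Δb 3)^p * y * (Δb 3)^(-p) =
      (Δb 3)^r * (((Δb 3)^(2:ℤ))^q * y * (((Δb 3)^(2:ℤ))^q)⁻¹) * (Δb 3)^(-r) := by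
    rw [hdecomp]; group
  rw [e, c]
  have : r = 0 ∨ r = 1 := Int.emod_two_eq_zero_or_one p
  rcases this with h0 | h1
  · rw [h0]; simpa using hy
  · rw [h1]
    have e2 : (Δb 3)^(1:ℤ) * y * (Δb 3)^(-(1:ℤ)) = Δb 3 * y * (Δb 3)⁻¹ := by group
    rw [e2]
    exact conj_D_S4 hy

/-! ### Normal lists and the core renormalization lemma -/

def NL (M : List (B 3)) : Prop :=
  (∀ s ∈ M, isS4 s) ∧ M.Chain' (LeftWeighted 3)

lemma getD_cond_iff (L : List (B 3)) :
    (∀ i : ℕ, i + 1 < L.length → LeftWeighted 3 (L.getD i 1) (L.getD (i+1) 1)) ↔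
      L.Chain' (LeftWeighted 3) := by
  unfold List.Chain'
  rw [List.isChain_iff_getElem]
  constructor
  · intro h i hi
    have h2 := h i (by omega)
    have hi' : i < L.length := by omega
    rwa [List.getD_eq_getElem?_getD, List.getD_eq_getElem?_getD, List.getElem?_eq_getElem hi',
      List.getElem?_eq_getElem hi, Option.getD_some, Option.getD_some] at h2
  · intro h i hi
    have h2 := h i (by omega)
    have hi' : i < L.length := by omega
    rwa [List.getD_eq_getElem?_getD, List.getD_eq_getElem?_getD, List.getElem?_eq_getElem hi',
      List.getElem?_eq_getElem hi, Option.getD_some, Option.getD_some]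

lemma isLNF_of_NL (p : ℤ) (L : List (B 3)) (h : NL L) :
    IsLNF 3 ((Δb 3)^p * L.prod) p L :=
  ⟨rfl, fun s hs => ⟨simple_of_S4 (h.1 s hs), ne_one_of_S4 (h.1 s hs), ne_D_of_S4 (h.1 s hs)⟩,
   (getD_cond_iff L).2 h.2⟩

lemma core (k : ℕ) : ∀ (M : List (B 3)), M.length ≤ k → ∀ (p : ℤ) (s : B 3),
    NL M → isS4 s →
    ∃ (p' : ℤ) (L' : List (B 3)), IsLNF 3 ((Δb 3)^p * M.prod * s) p' L' ∧
      L'.length ≤ M.length + 1 ∧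
      ∀ m, M.getLast? = some m → ¬ LeftWeighted 3 m s → L'.length ≤ M.length := by
  induction k with
  | zero =>
    intro M hM p s hNL hs
    have hM0 : M = [] := List.length_eq_zero_iff.mp (by omega)
    subst hM0
    refine ⟨p, [s], ?_, by simp, by simp⟩
    have e : (Δb 3)^p * [].prod * s = (Δb 3)^p * [s].prod := by simp
    rw [e]
    exact isLNF_of_NL p [s] ⟨by simpa using hs, List.isChain_singleton s⟩
  | succ k ih =>
    intro M hM p s hNL hs
    rcases List.eq_nil_or_concat' M with rfl | ⟨M₀, m, rfl⟩
    · exact ih [] (by simp) p s hNL hs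
    by_cases hlw : LeftWeighted 3 m s
    · -- append s, stays normal
      refine ⟨p, M₀ ++ [m] ++ [s], ?_, by simp, ?_⟩
      · have e : (Δb 3)^p * (M₀ ++ [m]).prod * s = (Δb 3)^p * (M₀ ++ [m] ++ [s]).prod := by
          rw [List.prod_append (l₁ := M₀ ++ [m])]
          simp [mul_assoc]
        rw [e]
        apply isLNF_of_NL
        refine ⟨?_, ?_⟩
        · intro x hx
          rcases List.mem_append.mp hx with hx | hx
          · exact hNL.1 x hx
          · have : x = s := by simpa using hx
            subst this; exact hs
        · refine hNL.2.append (List.isChain_singleton s) ?_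
          intro x hx y hy
          have hy' : y = s := (by simpa using hy : s = y).symm
          subst hy'
          rw [List.getLast?_concat] at hx
          have hx' : x = m := (by simpa using hx : m = x).symm
          subst hx'; exact hlw
      · intro m' hm' hnlw
        rw [List.getLast?_concat] at hm'
        have : m' = m := (by simpa using hm' : m = m').symm
        subst this
        exact absurd hlw hnlw
    · -- last pair not left-weighted : absorb
      have hm : isS4 m := hNL.1 m (by simp)
      have hNL0 : NL M₀ := ⟨fun x hx => hNL.1 x (by simp [hx]), hNL.2.left_of_append⟩
      have hNLψ : NL (M₀.map ψm) := by
        refine ⟨?_, ?_⟩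
        · intro x hx
          obtain ⟨y, hy, rfl⟩ := List.mem_map.mp hx
          exact ψm_S4 (hNL0.1 y hy)
        · exact (List.isChain_map ψm).2 (List.IsChain.imp (fun a b h => LW_conj h) hNL0.2)
      have hlen0 : M₀.length ≤ k := by simp at hM; omega
      have hlenψ : (M₀.map ψm).length ≤ k := by simpa using hlen0
      have hprod0 : ∀ (m s : B 3),
          (Δb 3)^p * (M₀ ++ [m]).prod * s = (Δb 3)^p * M₀.prod * (m * s) := by
        intro m s
        rw [List.prod_append]
        simp only [List.prod_cons, List.prod_nil, mul_one]
        group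
      have hprodD : ∀ (m s s'' : B 3), m * s = Δb 3 * s'' →
          (Δb 3)^p * (M₀ ++ [m]).prod * s = (Δb 3)^(p+1) * (M₀.map ψm).prod * s'' := by
        intro m s s'' he
        rw [hprod0, he, ← map_list_prod ψm M₀, ψm_apply, zpow_add_one]
        group
      have hA : isS4 (s1 * s2) := Or.inr (Or.inr (Or.inl rfl))
      have hB : isS4 (s2 * s1) := Or.inr (Or.inr (Or.inr rfl))
      have hs1 : isS4 s1 := Or.inl rfl
      have hs2 : isS4 s2 := Or.inr (Or.inl rfl)
      rcases hm with rfl | rfl | rfl | rfl <;> rcases hs with rfl | rfl | rfl | rfl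
      · exact absurd LW_s1_s1 hlw
      · -- s1 * s2 = A
        obtain ⟨p', L', h1, hl2, _⟩ := ih M₀ hlen0 p (s1*s2) hNL0 hA
        exact ⟨p', L', by rw [hprod0]; exact h1,
          by simp; omega, fun _ _ _ => by simp; omega⟩
      · exact absurd LW_s1_A hlw
      · -- s1 * (s2*s1) = Δ
        refine ⟨p+1, M₀.map ψm, ?_, by simp; omega, fun _ _ _ => by simp⟩
        rw [hprodD s1 (s2*s1) 1 (by rw [mul_one, delta_eq]; group), mul_one]
        exact isLNF_of_NL (p+1) _ hNLψ
      · -- s2 * s1 = B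
        obtain ⟨p', L', h1, hl2, _⟩ := ih M₀ hlen0 p (s2*s1) hNL0 hB
        exact ⟨p', L', by rw [hprod0]; exact h1,
          by simp; omega, fun _ _ _ => by simp; omega⟩
      · exact absurd LW_s2_s2 hlw
      · -- s2 * (s1*s2) = Δ
        refine ⟨p+1, M₀.map ψm, ?_, by simp; omega, fun _ _ _ => by simp⟩
        rw [hprodD s2 (s1*s2) 1 (by rw [mul_one, delta_eq']; group), mul_one]
        exact isLNF_of_NL (p+1) _ hNLψ
      · exact absurd LW_s2_B hlw
      · -- (s1*s2) * s1 = Δ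
        refine ⟨p+1, M₀.map ψm, ?_, by simp; omega, fun _ _ _ => by simp⟩
        rw [hprodD (s1*s2) s1 1 (by rw [mul_one, delta_eq]), mul_one]
        exact isLNF_of_NL (p+1) _ hNLψ
      · exact absurd LW_A_s2 hlw
      · -- (s1*s2) * (s1*s2) = Δ * s2
        obtain ⟨p', L', h1, hl2, _⟩ := ih (M₀.map ψm) hlenψ (p+1) s2 hNLψ hs2
        refine ⟨p', L', ?_, by simp at hl2 ⊢; omega, fun _ _ _ => by simp at hl2 ⊢; omega⟩
        rw [hprodD (s1*s2) (s1*s2) s2 (by rw [delta_eq]; group)]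
        exact h1
      · exact absurd LW_A_B hlw
      · exact absurd LW_B_s1 hlw
      · -- (s2*s1) * s2 = Δ
        refine ⟨p+1, M₀.map ψm, ?_, by simp; omega, fun _ _ _ => by simp⟩
        rw [hprodD (s2*s1) s2 1 (by rw [mul_one, delta_eq']), mul_one]
        exact isLNF_of_NL (p+1) _ hNLψ
      · exact absurd LW_B_A hlw
      · -- (s2*s1) * (s2*s1) = Δ * s1
        obtain ⟨p', L', h1, hl2, _⟩ := ih (M₀.map ψm) hlenψ (p+1) s1 hNLψ hs1
        refine ⟨p', L', ?_, by simp at hl2 ⊢; omega, fun _ _ _ => by simp at hl2 ⊢; omega⟩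
        rw [hprodD (s2*s1) (s2*s1) s1 (by rw [delta_eq']; group)]
        exact h1

/-- Let `y = Δ^p y_1 ⋯ y_r` be a 3-braid in left normal form with
`r ≥ 2` which is not rigid (the pair `(y_r, τ^{-p}(y_1))` is not left-weighted).
Then the conjugate `z = τ^{-p}(y_1)⁻¹ y τ^{-p}(y_1) = Δ^p y_2 ⋯ y_r τ^{-p}(y_1)`
has canonical length `ℓ(z) < r`. -/
theorem canLen_lt_of_not_rigid_B3 (y : B 3) (p : ℤ) (L : List (B 3))
    (hLNF : IsLNF 3 y p L) (h2 : 2 ≤ L.length)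
    (hnr : ¬ LeftWeighted 3 (L.getLastD 1) (τpow 3 (-p) (L.headD 1))) :
    canLen 3 ((τpow 3 (-p) (L.headD 1))⁻¹ * y * τpow 3 (-p) (L.headD 1)) <
      L.length := by
  obtain ⟨hy, hfac, hch⟩ := hLNF
  rcases L with _ | ⟨y1, M⟩
  · simp at h2
  simp only [List.headD_cons] at hnr ⊢
  have hMne : M ≠ [] := by
    intro h; subst h; simp at h2
  have hS4 : ∀ x ∈ (y1 :: M), isS4 x := by
    intro x hx
    have h := hfac x hx
    exact S4_of_simple h.1 h.2.1 h.2.2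
  have hy1 : isS4 y1 := hS4 y1 (by simp)
  have ht'E : τpow 3 (-p) y1 = (Δb 3)^p * y1 * (Δb 3)^(-p) := by
    simp [τpow]
  have ht' : isS4 (τpow 3 (-p) y1) := by
    rw [ht'E]; exact conj_zpow_S4 p hy1
  have hchain : (y1 :: M).Chain' (LeftWeighted 3) := (getD_cond_iff _).1 hch
  have hNLM : NL M := ⟨fun x hx => hS4 x (by simp [hx]), hchain.tail⟩
  have hzeq : (τpow 3 (-p) y1)⁻¹ * y * τpow 3 (-p) y1 =
      (Δb 3)^p * M.prod * τpow 3 (-p) y1 := by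
    rw [hy, List.prod_cons, ht'E]
    group
  have hlast : (y1 :: M).getLastD 1 = M.getLast hMne := by
    rw [List.getLastD_cons, List.getLastD_eq_getLast?, List.getLast?_eq_getLast hMne]
    rfl
  rw [hlast] at hnr
  obtain ⟨p', L', hLNF', hlen, hlastcl⟩ := core M.length M le_rfl p (τpow 3 (-p) y1) hNLM ht'
  have hlen' : L'.length ≤ M.length :=
    hlastcl (M.getLast hMne) (List.getLast?_eq_getLast hMne) hnr
  have hle : canLen 3 ((τpow 3 (-p) y1)⁻¹ * y * τpow 3 (-p) y1) ≤ L'.length := by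
    apply Nat.sInf_le
    exact ⟨p', L', rfl, by rw [hzeq]; exact hLNF'⟩
  simp only [List.length_cons]
  omega

end Braid
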